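/- Let n be a positive integer, let G be a discrete subgroup of ℝ^{2n}, let H be a subgroup of G such that the quotient group G/H is infinite cyclic, and let x ∈ G be an element whose coset Hx generates G/H. If ζ ∈ ℂ with |ζ| = 1, then there exists y ∈ ℝ^{2n} such that π(y) π(h) π(y)⁻¹ = π(h) for all h ∈ H and π(y) π(x) π(y)⁻¹ = ζ·π(x) in B(L²(ℝⁿ)). -/

import Mathlib

set_option maxHeartbeats 1000000
set_option synthInstance.maxHeartbeats 1000000

open MeasureTheory Complex

noncomputable section

abbrev RV (n : ℕ) := Fin n → ℝ

abbrev L2 (n : ℕ) := Lp ℂ 2 (volume : Measure (RV n))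

/-- The dot product on `ℝⁿ`. -/
def dotR {n : ℕ} (x y : RV n) : ℝ := ∑ i, x i * y i

/-- The function `t ↦ e^{2πi y·t} f(t+x)`. -/
def tfsFun {n : ℕ} (x y : RV n) (f : RV n → ℂ) : RV n → ℂ :=
  fun t => Complex.exp (((2 * Real.pi * dotR y t : ℝ) : ℂ) * Complex.I) * f (t + x)

lemma memLp_tfsFun {n : ℕ} (x y : RV n) (f : L2 n) :
    MemLp (tfsFun x y (f : RV n → ℂ)) 2 (volume : Measure (RV n)) := by
  have hmp : MeasurePreserving (fun t : RV n => t + x) volume volume :=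
    measurePreserving_add_right volume x
  have h1 : MemLp (fun t : RV n => (f : RV n → ℂ) (t + x)) 2 volume :=
    (Lp.memLp f).comp_measurePreserving hmp
  have hcont : Continuous fun t : RV n =>
      Complex.exp (((2 * Real.pi * dotR y t : ℝ) : ℂ) * Complex.I) := by
    unfold dotR
    fun_prop
  refine MemLp.of_le h1 (hcont.aestronglyMeasurable.mul h1.1) ?_
  filter_upwards with t
  simp only [tfsFun, norm_mul]
  rw [Complex.norm_exp_ofReal_mul_I, one_mul]
lemma tfsFun_congr {n : ℕ} (x y : RV n) {f g : RV n → ℂ}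
    (h : f =ᵐ[(volume : Measure (RV n))] g) :
    tfsFun x y f =ᵐ[(volume : Measure (RV n))] tfsFun x y g := by
  have hmp : MeasurePreserving (fun t : RV n => t + x) volume volume :=
    measurePreserving_add_right volume x
  have h2 := hmp.quasiMeasurePreserving.ae_eq_comp h
  filter_upwards [h2] with t ht
  simp only [Function.comp] at ht
  simp [tfsFun, ht]

/-- The time-frequency shift `π(x,y)` as a bounded operator on `L²(ℝⁿ)`:
`(π(x,y)f)(t) = e^{2πi y·t} f(t+x)`. -/
def TFS {n : ℕ} (x y : RV n) : L2 n →L[ℂ] L2 n :=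
  LinearMap.mkContinuous
    { toFun := fun f => (memLp_tfsFun x y f).toLp _
      map_add' := fun f g => by
        apply Lp.ext
        have h6 := tfsFun_congr x y (Lp.coeFn_add f g)
        filter_upwards [(memLp_tfsFun x y (f + g)).coeFn_toLp, h6,
          Lp.coeFn_add ((memLp_tfsFun x y f).toLp _) ((memLp_tfsFun x y g).toLp _),
          (memLp_tfsFun x y f).coeFn_toLp, (memLp_tfsFun x y g).coeFn_toLp]
          with t e1 e6 e4 e2 e3
        rw [e1, e6, e4, Pi.add_apply, e2, e3]
        simp [tfsFun, mul_add]
      map_smul' := fun c f => by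
        apply Lp.ext
        have h6 := tfsFun_congr x y (Lp.coeFn_smul c f)
        filter_upwards [(memLp_tfsFun x y (c • f)).coeFn_toLp, h6,
          Lp.coeFn_smul c ((memLp_tfsFun x y f).toLp _),
          (memLp_tfsFun x y f).coeFn_toLp]
          with t e1 e6 e4 e2
        simp only [RingHom.id_apply]
        rw [e1, e6, e4, Pi.smul_apply, e2]
        simp [tfsFun]
        ring }
    1
    (fun f => by
      have hmp : MeasurePreserving (fun t : RV n => t + x) volume volume :=
        measurePreserving_add_right volume x
      simp only [LinearMap.coe_mk, AddHom.coe_mk, one_mul]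
      rw [Lp.norm_toLp _ (memLp_tfsFun x y f), Lp.norm_def]
      refine ENNReal.toReal_mono (Lp.eLpNorm_ne_top f) ?_
      have h1 : eLpNorm (tfsFun x y (f : RV n → ℂ)) 2 volume
          ≤ eLpNorm (((f : RV n → ℂ)) ∘ (fun t => t + x)) 2 volume := by
        refine eLpNorm_mono_ae ?_
        filter_upwards with t
        simp only [tfsFun, norm_mul, Function.comp]
        rw [Complex.norm_exp_ofReal_mul_I, one_mul]
      refine h1.trans ?_
      rw [eLpNorm_comp_measurePreserving (Lp.aestronglyMeasurable f) hmp])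

/-- `π(g)` for `g = (x,y) ∈ ℝ²ⁿ`. -/
def TFSp {n : ℕ} (g : RV n × RV n) : L2 n →L[ℂ] L2 n := TFS g.1 g.2

lemma TFS_coeFn {n : ℕ} (x y : RV n) (f : L2 n) :
    (TFS x y f : RV n → ℂ) =ᵐ[(volume : Measure (RV n))] tfsFun x y (f : RV n → ℂ) :=
  (memLp_tfsFun x y f).coeFn_toLp

lemma dotR_comm {n : ℕ} (x y : RV n) : dotR x y = dotR y x := by
  simp [dotR, mul_comm]

lemma dotR_add_right {n : ℕ} (y t a : RV n) : dotR y (t + a) = dotR y t + dotR y a := by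
  simp [dotR, mul_add, Finset.sum_add_distrib]

lemma dotR_add_left {n : ℕ} (b d t : RV n) : dotR (b + d) t = dotR b t + dotR d t := by
  simp [dotR, add_mul, Finset.sum_add_distrib]

lemma TFS_one {n : ℕ} : TFS (0 : RV n) (0 : RV n) = 1 := by
  refine ContinuousLinearMap.ext fun f => ?_
  apply Lp.ext
  filter_upwards [TFS_coeFn (0 : RV n) 0 f] with t ht
  rw [ht]
  simp [tfsFun, dotR]

lemma TFS_mul {n : ℕ} (a b c d : RV n) :
    TFS a b * TFS c d
      = Complex.exp (((2 * Real.pi * dotR a d : ℝ) : ℂ) * Complex.I) • TFS (a + c) (b + d) := by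
  refine ContinuousLinearMap.ext fun f => ?_
  apply Lp.ext
  have h1 := TFS_coeFn a b (TFS c d f)
  have h2 := tfsFun_congr a b (TFS_coeFn c d f)
  have h3 := Lp.coeFn_smul (Complex.exp (((2 * Real.pi * dotR a d : ℝ) : ℂ) * Complex.I))
    (TFS (a + c) (b + d) f)
  filter_upwards [h1, h2, h3, TFS_coeFn (a + c) (b + d) f] with t e1 e2 e3 e4
  show (TFS a b) ((TFS c d) f) t = _
  rw [ContinuousLinearMap.smul_apply, e1, e2, e3, Pi.smul_apply, e4]
  simp only [tfsFun, smul_eq_mul]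
  rw [add_assoc, ← mul_assoc, ← mul_assoc, ← Complex.exp_add, ← Complex.exp_add]
  congr 2
  rw [← add_mul, ← add_mul]
  congr 1
  push_cast
  rw [dotR_add_right, dotR_add_left, dotR_comm a d]
  push_cast
  ring

lemma TFSp_mul {n : ℕ} (g h : RV n × RV n) :
    TFSp g * TFSp h
      = Complex.exp (((2 * Real.pi * dotR g.1 h.2 : ℝ) : ℂ) * Complex.I) • TFSp (g + h) :=
  TFS_mul g.1 g.2 h.1 h.2

/-- The linear span of the `π(g)`, `g ∈ G`, inside `B(L²(ℝⁿ))`, as a `ℂ`-submodule. -/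
def spanTFS (n : ℕ) (G : AddSubgroup (RV n × RV n)) : Submodule ℂ (L2 n →L[ℂ] L2 n) :=
  Submodule.span ℂ (Set.range fun g : G => TFSp (g : RV n × RV n))

lemma one_mem_spanTFS (n : ℕ) (G : AddSubgroup (RV n × RV n)) :
    (1 : L2 n →L[ℂ] L2 n) ∈ spanTFS n G := by
  refine Submodule.subset_span ⟨0, ?_⟩
  show TFSp ((0 : RV n × RV n)) = 1
  exact TFS_one

lemma mul_mem_spanTFS {n : ℕ} {G : AddSubgroup (RV n × RV n)}
    {x y : L2 n →L[ℂ] L2 n} (hx : x ∈ spanTFS n G) (hy : y ∈ spanTFS n G) :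
    x * y ∈ spanTFS n G := by
  have h : spanTFS n G * spanTFS n G ≤ spanTFS n G := by
    rw [spanTFS, Submodule.span_mul_span]
    refine Submodule.span_le.2 ?_
    rintro z ⟨u, ⟨g, rfl⟩, v, ⟨k, rfl⟩, rfl⟩
    show TFSp (g : RV n × RV n) * TFSp (k : RV n × RV n) ∈ _
    rw [TFSp_mul]
    refine Submodule.smul_mem _ _ (Submodule.subset_span ⟨g + k, ?_⟩)
    norm_cast
  exact h (Submodule.mul_mem_mul hx hy)

/-- `ℂ*G`: the linear span of the `π(g)`, `g ∈ G`, as a subalgebra of `B(L²(ℝⁿ))`. -/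
def CGalg (n : ℕ) (G : AddSubgroup (RV n × RV n)) : Subalgebra ℂ (L2 n →L[ℂ] L2 n) :=
  (spanTFS n G).toSubalgebra (one_mem_spanTFS n G) (fun _ _ => mul_mem_spanTFS)

/-- `W*G`: the von Neumann algebra generated by `ℂ*G`, realized as the double
commutant of `ℂ*G` in `B(L²(ℝⁿ))`. -/
def WstarAlg (n : ℕ) (G : AddSubgroup (RV n × RV n)) : Subalgebra ℂ (L2 n →L[ℂ] L2 n) :=
  Subalgebra.centralizer ℂ
    ((Subalgebra.centralizer ℂ ((spanTFS n G : Set (L2 n →L[ℂ] L2 n)))) :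
      Set (L2 n →L[ℂ] L2 n))

lemma TFSp_mem_WstarAlg {n : ℕ} {G : AddSubgroup (RV n × RV n)} (g : G) :
    TFSp (g : RV n × RV n) ∈ WstarAlg n G := by
  rw [WstarAlg, Subalgebra.mem_centralizer_iff]
  intro c hc
  rw [SetLike.mem_coe, Subalgebra.mem_centralizer_iff] at hc
  exact (hc _ (Submodule.subset_span ⟨g, rfl⟩)).symm

/-!
Conjugation by `π(y)` multiplies `π(v)` by the phase `𝐞 (σ(y, v))`, where
`σ(y, v) = y₁·v₂ - v₁·y₂` is the standard symplectic form, and every real linear functional on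
`ℝ²ⁿ` is of the form `σ(y, ·)`. Writing `ζ = 𝐞 t`, it therefore suffices to find a linear
functional that vanishes on `H` and takes the value `t` at `x`. On `G` the composite
`G → G/H ≅ ℤ → ℝ` does this, and it extends linearly to `ℝ²ⁿ` because a discrete subgroup is
generated over `ℤ` by `ℝ`-linearly independent vectors.
-/

open FourierTransform

lemma LinearIndependent.exists_linearMap_apply_eq {K V W ι : Type*} [Field K] [AddCommGroup V]
    [Module K V] [AddCommGroup W] [Module K W] {v : ι → V} (hv : LinearIndependent K v)
    (w : ι → W) : ∃ f : V →ₗ[K] W, ∀ i, f (v i) = w i := by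
  obtain ⟨f, hf⟩ := LinearMap.exists_extend ((Module.Basis.span hv).constr K w)
  refine ⟨f, fun i => ?_⟩
  have := LinearMap.congr_fun hf (Module.Basis.span hv i)
  rwa [Module.Basis.constr_basis, LinearMap.comp_apply, Submodule.subtype_apply,
    Module.Basis.coe_span_apply] at this

lemma linearIndependent_real_of_discrete {E ι : Type*} [NormedAddCommGroup E] [NormedSpace ℝ E]
    [FiniteDimensional ℝ E] [Fintype ι] {M : Submodule ℤ E} [DiscreteTopology M]
    (b : Module.Basis ι ℤ M) : LinearIndependent ℝ fun i => (b i : E) := by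
  have hindep : LinearIndependent ℤ fun i => (b i : E) :=
    b.linearIndependent.map' M.subtype M.ker_subtype
  have hspan : Submodule.span ℤ (Set.range fun i => (b i : E)) = M := by
    rw [Set.range_comp' Subtype.val b, ← M.coe_subtype, ← Submodule.map_span, b.span_eq,
      Submodule.map_top, Submodule.range_subtype]
  have hdisc : DiscreteTopology (Submodule.span ℤ (Set.range fun i => (b i : E))) := by
    rwa [hspan]
  rw [linearIndependent_iff_card_eq_finrank_span, Real.finrank_eq_int_finrank_of_discrete hdisc]
  exact linearIndependent_iff_card_eq_finrank_span.mp hindep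

lemma AddSubgroup.exists_linearMap_extend_of_discrete {E F : Type*} [NormedAddCommGroup E]
    [NormedSpace ℝ E] [FiniteDimensional ℝ E] [AddCommGroup F] [Module ℝ F]
    (G : AddSubgroup E) [DiscreteTopology G] (ψ : G →+ F) :
    ∃ L : E →ₗ[ℝ] F, ∀ g : G, L g = ψ g := by
  let M : Submodule ℤ E := G.toIntSubmodule
  have : DiscreteTopology M := ‹DiscreteTopology G›
  let b := Module.Free.chooseBasis ℤ M
  obtain ⟨L, hL⟩ := (linearIndependent_real_of_discrete b).exists_linearMap_apply_eq
    fun i => ψ (b i)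
  refine ⟨L, fun g => ?_⟩
  have hext : (L.restrictScalars ℤ).comp M.subtype = ψ.toIntLinearMap :=
    b.ext fun i => hL i
  exact LinearMap.congr_fun hext g

lemma exists_addMonoidHom_apply_eq_of_zmultiples_eq_top {Q A : Type*} [AddCommGroup Q]
    [AddCommGroup A] (e : Q ≃+ ℤ) {a : Q} (ha : AddSubgroup.zmultiples a = ⊤) (c : A) :
    ∃ φ : Q →+ A, φ a = c := by
  obtain ⟨k, hk⟩ := AddSubgroup.mem_zmultiples_iff.mp (ha ▸ AddSubgroup.mem_top (e.symm 1))
  have hunit : IsUnit (e a) := IsUnit.of_mul_eq_one k <| by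
    simpa [mul_comm] using congrArg e hk
  refine ⟨(zmultiplesHom A (e a • c)).comp e.toAddMonoidHom, ?_⟩
  simp [smul_smul, Int.isUnit_mul_self hunit]

lemma exists_fourierChar_eq {ζ : ℂ} (hζ : ‖ζ‖ = 1) : ∃ t : ℝ, (𝐞 t : ℂ) = ζ := by
  obtain ⟨s, hs⟩ := Circle.exp_surjective ⟨ζ, mem_sphere_zero_iff_norm.mpr hζ⟩
  refine ⟨s / (2 * Real.pi), ?_⟩
  rw [Real.fourierChar_apply', mul_div_cancel₀ s Real.two_pi_pos.ne', hs]

def symplecticForm {n : ℕ} (y v : RV n × RV n) : ℝ := dotR y.1 v.2 - dotR v.1 y.2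

lemma exists_symplecticForm_eq {n : ℕ} (L : (RV n × RV n) →ₗ[ℝ] ℝ) :
    ∃ y, ∀ v, symplecticForm y v = L v := by
  classical
  refine ⟨(fun i => L (0, fun j => if i = j then 1 else 0),
    fun i => -L (fun j => if i = j then 1 else 0, 0)), fun v => ?_⟩
  have hsplit : L v = L (v.1, 0) + L (0, v.2) := by rw [← map_add, Prod.mk_add_mk]; simp
  have hfst := LinearMap.pi_apply_eq_sum_univ (L.comp (LinearMap.inl ℝ _ _)) v.1
  have hsnd := LinearMap.pi_apply_eq_sum_univ (L.comp (LinearMap.inr ℝ _ _)) v.2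
  simp only [LinearMap.comp_apply, LinearMap.inl_apply, LinearMap.inr_apply, smul_eq_mul]
    at hfst hsnd
  rw [hsplit, hfst, hsnd, symplecticForm, dotR, dotR,
    ← Finset.sum_sub_distrib, ← Finset.sum_add_distrib]
  exact Finset.sum_congr rfl fun i _ => by ring

lemma dotR_neg_left {n : ℕ} (x y : RV n) : dotR (-x) y = -dotR x y := by
  simp [dotR]

lemma dotR_neg_right {n : ℕ} (x y : RV n) : dotR x (-y) = -dotR x y := by
  simp [dotR]

lemma TFSp_mul_eq_fourierChar_smul {n : ℕ} (g h : RV n × RV n) :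
    TFSp g * TFSp h = (𝐞 (dotR g.1 h.2) : ℂ) • TFSp (g + h) :=
  TFSp_mul g h

lemma TFSp_zero {n : ℕ} : TFSp (0 : RV n × RV n) = 1 := TFS_one

lemma fourierChar_smul_fourierChar_smul {M : Type*} [AddCommGroup M] [Module ℂ M] (a b : ℝ)
    (m : M) : (𝐞 a : ℂ) • (𝐞 b : ℂ) • m = (𝐞 (a + b) : ℂ) • m := by
  rw [smul_smul, ← Circle.coe_mul, ← AddChar.map_add_eq_mul]

lemma TFSp_mul_comm {n : ℕ} (y v : RV n × RV n) :
    TFSp y * TFSp v = (𝐞 (symplecticForm y v) : ℂ) • (TFSp v * TFSp y) := by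
  rw [TFSp_mul_eq_fourierChar_smul, TFSp_mul_eq_fourierChar_smul,
    fourierChar_smul_fourierChar_smul, add_comm v, symplecticForm, sub_add_cancel]

lemma isUnit_TFSp {n : ℕ} (y : RV n × RV n) : IsUnit (TFSp y) := by
  have hright : TFSp y * ((𝐞 (dotR y.1 y.2) : ℂ) • TFSp (-y)) = 1 := by
    rw [mul_smul_comm, TFSp_mul_eq_fourierChar_smul, fourierChar_smul_fourierChar_smul]
    simp [dotR_neg_right, TFSp_zero]
  have hleft : ((𝐞 (dotR y.1 y.2) : ℂ) • TFSp (-y)) * TFSp y = 1 := by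
    rw [smul_mul_assoc, TFSp_mul_eq_fourierChar_smul, fourierChar_smul_fourierChar_smul]
    simp [dotR_neg_left, TFSp_zero]
  exact ⟨⟨_, _, hright, hleft⟩, rfl⟩

lemma TFSp_conj {n : ℕ} (y v : RV n × RV n) :
    TFSp y * TFSp v * Ring.inverse (TFSp y) = (𝐞 (symplecticForm y v) : ℂ) • TFSp v := by
  rw [TFSp_mul_comm, smul_mul_assoc, Ring.mul_inverse_cancel_right _ _ (isUnit_TFSp y)]

theorem statement8_general (n : ℕ) (G : AddSubgroup (RV n × RV n))
    (hG : DiscreteTopology G) (H : AddSubgroup G)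
    (e : (G ⧸ H) ≃+ ℤ) (x : G)
    (hx : AddSubgroup.zmultiples ((x : G ⧸ H)) = ⊤)
    (ζ : ℂ) (hζ : ‖ζ‖ = 1) :
    ∃ y : RV n × RV n,
      (∀ h : H, TFSp y * TFSp ((h : G) : RV n × RV n) * Ring.inverse (TFSp y)
          = TFSp ((h : G) : RV n × RV n))
      ∧ TFSp y * TFSp (x : RV n × RV n) * Ring.inverse (TFSp y)
          = ζ • TFSp (x : RV n × RV n) := by
  obtain ⟨t, rfl⟩ := exists_fourierChar_eq hζ
  obtain ⟨φ, hφ⟩ := exists_addMonoidHom_apply_eq_of_zmultiples_eq_top e hx t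
  obtain ⟨L, hL⟩ := G.exists_linearMap_extend_of_discrete (φ.comp (QuotientAddGroup.mk' H))
  obtain ⟨y, hy⟩ := exists_symplecticForm_eq L
  refine ⟨y, fun h => ?_, ?_⟩
  · rw [TFSp_conj, hy, hL, AddMonoidHom.comp_apply, QuotientAddGroup.mk'_apply,
      (QuotientAddGroup.eq_zero_iff _).mpr h.2, map_zero, AddChar.map_zero_eq_one, Circle.coe_one,
      one_smul]
  · rw [TFSp_conj, hy, hL, AddMonoidHom.comp_apply, QuotientAddGroup.mk'_apply, hφ]

/-- Let `G ≤ ℝ²ⁿ` be discrete, `H ≤ G` with `G/H` infinite cyclic, `x ∈ G`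
with `Hx` generating `G/H`, and `|ζ| = 1`.  Then there is `y ∈ ℝ²ⁿ` with
`π(y) π(h) π(y)⁻¹ = π(h)` for all `h ∈ H` and `π(y) π(x) π(y)⁻¹ = ζ π(x)`. -/
theorem statement8 (n : ℕ) (hn : 0 < n) (G : AddSubgroup (RV n × RV n))
    (hG : DiscreteTopology G) (H : AddSubgroup G)
    (e : (G ⧸ H) ≃+ ℤ) (x : G)
    (hx : AddSubgroup.zmultiples ((x : G ⧸ H)) = ⊤)
    (ζ : ℂ) (hζ : ‖ζ‖ = 1) :
    ∃ y : RV n × RV n,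
      (∀ h : H, TFSp y * TFSp ((h : G) : RV n × RV n) * Ring.inverse (TFSp y)
          = TFSp ((h : G) : RV n × RV n))
      ∧ TFSp y * TFSp (x : RV n × RV n) * Ring.inverse (TFSp y)
          = ζ • TFSp (x : RV n × RV n) :=
  statement8_general n G hG H e x hx ζ hζ

end
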